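/- If V ∈ 𝓕, then every point u ∈ Λ(Ψ(V)) is of the form u = ( max_{b∈B} [ Σ_{a∈A} α_a r_k(a,b) + β Q_k(b) ] )_{k=1,…,K} for some α ∈ Δ(A) and some choice of Q(b) ∈ V for each b ∈ B. -/

import Mathlib

/-- The upset of `A` within `[0,1]^K`: points of `[0,1]^K` dominating some point of `A`. -/
def upset (K : ℕ) (A : Set (Fin K → ℝ)) : Set (Fin K → ℝ) :=
  {x | x ∈ Set.Icc (0 : Fin K → ℝ) 1 ∧ ∃ y ∈ A, y ≤ x}

/-- Membership in the space `𝓕`: a nonempty Pareto frontier in `[0,1]^K`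
(no element dominates a different element) whose upset is closed and convex. -/
def memF (K : ℕ) (V : Set (Fin K → ℝ)) : Prop :=
  V.Nonempty ∧ V ⊆ Set.Icc (0 : Fin K → ℝ) 1 ∧
    (∀ u ∈ V, ∀ v ∈ V, u ≤ v → u = v) ∧
    IsClosed (upset K V) ∧ Convex ℝ (upset K V)

/-- The metric `d` on `𝓕`: Hausdorff distance (for the ℓ∞ norm) between upsets. -/
noncomputable def dF (K : ℕ) (U V : Set (Fin K → ℝ)) : ℝ :=
  Metric.hausdorffDist (upset K U) (upset K V)

/-- The lower Pareto frontier `Λ(S)`: the minimal elements of `S` in the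
coordinatewise order, i.e. the elements of `S` dominating no other element of `S`. -/
def pareto (K : ℕ) (S : Set (Fin K → ℝ)) : Set (Fin K → ℝ) :=
  {x ∈ S | ∀ y ∈ S, y ≤ x → y = x}

/-- The probability simplex over `Fin m`. -/
def simplex (m : ℕ) : Set (Fin m → ℝ) :=
  {α | (∀ a, 0 ≤ α a) ∧ ∑ a, α a = 1}

/-- The one-stage operator `Ψ`. -/
def psi (K m n : ℕ) (hn : 0 < n) (β : ℝ) (r : Fin K → Fin m → Fin n → ℝ)
    (S : Set (Fin K → ℝ)) : Set (Fin K → ℝ) :=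
  {u | ∃ α ∈ simplex m, ∃ R : Fin m → Fin n → Fin K → ℝ,
    (∀ a b, R a b ∈ S) ∧
    ∀ k, u k = Finset.univ.sup'
      (Finset.univ_nonempty_iff.mpr (Fin.pos_iff_nonempty.mp hn))
      (fun b => ∑ a, α a * (r k a b + β * R a b k))}

/- Write `u ∈ Λ(Ψ(V))` as `u = Ψ(α, R)`. For each `b`, the mixture `Σ_a α_a R(a,b)`
lies in `up(V)` by convexity, so it dominates some `Q(b) ∈ V`. Playing `α` against the
continuation `R(a,b) := Q(b)` gives a point of `Ψ(V)` of the required form that is dominated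
by `u` (as `β ≥ 0`), hence equal to `u` by minimality. -/

lemma subset_upset {K : ℕ} {V : Set (Fin K → ℝ)} (hV : V ⊆ Set.Icc 0 1) : V ⊆ upset K V :=
  fun v hv => ⟨hV hv, v, hv, le_rfl⟩

lemma exists_le_sum_smul_of_convex_upset {K m : ℕ} {V : Set (Fin K → ℝ)}
    (hVI : V ⊆ Set.Icc 0 1) (hVc : Convex ℝ (upset K V)) {α : Fin m → ℝ} (hα : α ∈ simplex m)
    {R : Fin m → Fin K → ℝ} (hR : ∀ a, R a ∈ V) : ∃ Q ∈ V, Q ≤ ∑ a, α a • R a :=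
  (hVc.sum_mem (fun a _ => hα.1 a) hα.2 fun a _ => subset_upset hVI (hR a)).2

lemma sum_mul_add_of_mem_simplex {m : ℕ} {α : Fin m → ℝ} (hα : α ∈ simplex m) (x : Fin m → ℝ)
    (c : ℝ) : ∑ a, α a * (x a + c) = ∑ a, α a * x a + c := by
  simp only [mul_add, Finset.sum_add_distrib, ← Finset.sum_mul, hα.2, one_mul]

section psi

variable {K m n : ℕ} (hn : 0 < n) {β : ℝ} (r : Fin K → Fin m → Fin n → ℝ) {α : Fin m → ℝ}

lemma sup'_mem_psi {V : Set (Fin K → ℝ)} (hα : α ∈ simplex m) {Q : Fin n → Fin K → ℝ}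
    (hQ : ∀ b, Q b ∈ V) :
    (fun k => Finset.univ.sup' (Finset.univ_nonempty_iff.mpr (Fin.pos_iff_nonempty.mp hn))
      (fun b => (∑ a, α a * r k a b) + β * Q b k)) ∈ psi K m n hn β r V :=
  ⟨α, hα, fun _ b => Q b, fun _ b => hQ b, fun _ =>
    Finset.sup'_congr _ rfl fun _ _ => (sum_mul_add_of_mem_simplex hα _ _).symm⟩

lemma sup'_le_sup'_of_le_sum_smul (hβ : 0 ≤ β) {R : Fin m → Fin n → Fin K → ℝ}
    {Q : Fin n → Fin K → ℝ} (hQ : ∀ b, Q b ≤ ∑ a, α a • R a b) (k : Fin K) :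
    Finset.univ.sup' (Finset.univ_nonempty_iff.mpr (Fin.pos_iff_nonempty.mp hn))
        (fun b => (∑ a, α a * r k a b) + β * Q b k) ≤
      Finset.univ.sup' (Finset.univ_nonempty_iff.mpr (Fin.pos_iff_nonempty.mp hn))
        (fun b => ∑ a, α a * (r k a b + β * R a b k)) := by
  refine Finset.sup'_mono_fun fun b _ => ?_
  have hQk : Q b k ≤ ∑ a, α a * R a b k := by
    simpa only [Finset.sum_apply, Pi.smul_apply, smul_eq_mul] using hQ b k
  calc (∑ a, α a * r k a b) + β * Q b k
      ≤ (∑ a, α a * r k a b) + β * ∑ a, α a * R a b k := by gcongr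
    _ = ∑ a, α a * (r k a b + β * R a b k) := by
      simp only [mul_add, Finset.sum_add_distrib, Finset.mul_sum, mul_left_comm]

end psi

theorem pareto_psi_form_general {K m n : ℕ} (hn : 0 < n)
    (β : ℝ) (hβ : β ∈ Set.Ico (0:ℝ) 1)
    (r : Fin K → Fin m → Fin n → ℝ)
    (V : Set (Fin K → ℝ)) (hV : memF K V)
    (u : Fin K → ℝ) (hu : u ∈ pareto K (psi K m n hn β r V)) :
    ∃ α ∈ simplex m, ∃ Q : Fin n → Fin K → ℝ, (∀ b, Q b ∈ V) ∧
      ∀ k, u k = Finset.univ.sup'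
        (Finset.univ_nonempty_iff.mpr (Fin.pos_iff_nonempty.mp hn))
        (fun b => (∑ a, α a * r k a b) + β * Q b k) := by
  obtain ⟨⟨α, hα, R, hR, hu⟩, hmin⟩ := hu
  obtain rfl : u = _ := funext hu
  obtain ⟨-, hVI, -, -, hVc⟩ := hV
  choose Q hQV hQle using fun b => exists_le_sum_smul_of_convex_upset hVI hVc hα (hR · b)
  exact ⟨α, hα, Q, hQV, congrFun (hmin _ (sup'_mem_psi hn r hα hQV)
    (sup'_le_sup'_of_le_sum_smul hn r hβ.1 hQle)).symm⟩

/-- every point of `Λ(Ψ(V))` is of the form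
`( max_b [ Σ_a α_a r_k(a,b) + β Q_k(b) ] )_k` with `α ∈ Δ(A)` and `Q(b) ∈ V`. -/
theorem pareto_psi_form {K m n : ℕ} (hK : 0 < K) (hm : 0 < m) (hn : 0 < n)
    (β : ℝ) (hβ : β ∈ Set.Ico (0:ℝ) 1)
    (r : Fin K → Fin m → Fin n → ℝ) (hr : ∀ k a b, r k a b ∈ Set.Icc (0:ℝ) (1 - β))
    (V : Set (Fin K → ℝ)) (hV : memF K V)
    (u : Fin K → ℝ) (hu : u ∈ pareto K (psi K m n hn β r V)) :
    ∃ α ∈ simplex m, ∃ Q : Fin n → Fin K → ℝ, (∀ b, Q b ∈ V) ∧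
      ∀ k, u k = Finset.univ.sup'
        (Finset.univ_nonempty_iff.mpr (Fin.pos_iff_nonempty.mp hn))
        (fun b => (∑ a, α a * r k a b) + β * Q b k) :=
  pareto_psi_form_general hn β hβ r V hV u hu
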